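/- arXiv:1812.11228 — 10 statements merged into one kernel-verified Lean document; each statement's English description precedes it below -/
import Mathlib

section
/- The matrices A = [[1,2],[0,1]] and B = [[1,0],[2,1]] generate a free subgroup of rank 2 in SL(2,ℤ): the group homomorphism from the free group on two generators to SL(2,ℤ) sending the two generators to A and B respectively is injective. -/
/-!
`SL(2,ℤ)` acts on the upper half-plane by Möbius transformations. Put
`X₀ = {1 ≤ re z}`, `Y₀ = {re z ≤ -1}`, `X₁ = {|2z - 1| ≤ 1}`, `Y₁ = {|2z + 1| ≤ 1}`:
four pairwise disjoint sets, since `X₁` and `Y₁` are half-disks with real parts in `(0, 1)`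
and `(-1, 0)`. Then `A : z ↦ z + 2` maps the complement of `Y₀` into `X₀`, and
`B : z ↦ z / (2z + 1)` maps the complement of `Y₁` into `X₁` because
`2 B z - 1 = -(2z + 1)⁻¹`. The ping-pong lemma makes the lift from the free group injective.
-/

/-- The matrix `[[1,2],[0,1]]` as an element of `SL(2,ℤ)`. -/
def matA : Matrix.SpecialLinearGroup (Fin 2) ℤ :=
  ⟨!![1, 2; 0, 1], by norm_num [Matrix.det_fin_two_of]⟩

/-- The matrix `[[1,0],[2,1]]` as an element of `SL(2,ℤ)`. -/
def matB : Matrix.SpecialLinearGroup (Fin 2) ℤ :=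
  ⟨!![1, 0; 2, 1], by norm_num [Matrix.det_fin_two_of]⟩

open UpperHalfPlane Set
open scoped Function Pointwise

lemma Fin.pairwise_disjoint_on_two {α : Type*} [PartialOrder α] [OrderBot α] {f : Fin 2 → α} :
    Pairwise (Disjoint on f) ↔ Disjoint (f 0) (f 1) := by
  refine ⟨fun h => h zero_ne_one, fun h i j hij => ?_⟩
  fin_cases i <;> fin_cases j
  exacts [absurd rfl hij, h, h.symm, absurd rfl hij]

theorem Set.inv_smul_set_compl_subset_of_smul_set_compl_subset {G α : Type*} [Group G]
    [MulAction G α] {a : G} {X Y : Set α} (h : a • Yᶜ ⊆ X) : a⁻¹ • Xᶜ ⊆ Y := by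
  rw [← subset_smul_set_iff, ← compl_subset_comm, ← smul_set_compl]
  exact h

lemma Complex.re_mem_Ioo_of_norm_two_mul_sub_one_le {w : ℂ} (hw : 0 < w.im)
    (h : ‖2 * w - 1‖ ≤ 1) : w.re ∈ Ioo 0 1 := by
  rw [← sq_le_one_iff₀ (norm_nonneg _), Complex.sq_norm, Complex.normSq_apply] at h
  norm_num at h
  constructor <;> nlinarith

lemma Complex.re_mem_Ioo_of_norm_two_mul_add_one_le {w : ℂ} (hw : 0 < w.im)
    (h : ‖2 * w + 1‖ ≤ 1) : w.re ∈ Ioo (-1) 0 := by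
  rw [← sq_le_one_iff₀ (norm_nonneg _), Complex.sq_norm, Complex.normSq_apply] at h
  norm_num at h
  constructor <;> nlinarith

lemma UpperHalfPlane.two_mul_add_one_ne_zero (z : ℍ) : 2 * (z : ℂ) + 1 ≠ 0 := by
  intro h
  simpa [z.im_ne_zero] using congr_arg Complex.im h

lemma coe_matA_smul (z : ℍ) : ((matA • z : ℍ) : ℂ) = z + 2 := by
  rw [coe_specialLinearGroup_apply]
  simp [matA]

lemma coe_matB_smul (z : ℍ) : ((matB • z : ℍ) : ℂ) = z / (2 * z + 1) := by
  rw [coe_specialLinearGroup_apply]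
  simp [matB]

lemma two_mul_coe_matB_smul_sub_one (z : ℍ) :
    2 * ((matB • z : ℍ) : ℂ) - 1 = -(2 * (z : ℂ) + 1)⁻¹ := by
  rw [coe_matB_smul]
  field_simp [z.two_mul_add_one_ne_zero]
  ring

lemma matA_smul_compl_subset : matA • {z : ℍ | z.re ≤ -1}ᶜ ⊆ {z | 1 ≤ z.re} := by
  rw [smul_set_subset_iff]
  intro z (hz : ¬ z.re ≤ -1)
  have : (matA • z).re = z.re + 2 := by simpa using congr_arg Complex.re (coe_matA_smul z)
  show 1 ≤ (matA • z).re
  linarith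

lemma matB_smul_compl_subset :
    matB • {z : ℍ | ‖2 * (z : ℂ) + 1‖ ≤ 1}ᶜ ⊆ {z | ‖2 * (z : ℂ) - 1‖ ≤ 1} := by
  rw [smul_set_subset_iff]
  intro z (hz : ¬ ‖2 * (z : ℂ) + 1‖ ≤ 1)
  show ‖2 * ((matB • z : ℍ) : ℂ) - 1‖ ≤ 1
  rw [two_mul_coe_matB_smul_sub_one, norm_neg, norm_inv]
  exact inv_le_one_of_one_le₀ (le_of_not_ge hz)

/-- The matrices `A = [[1,2],[0,1]]` and `B = [[1,0],[2,1]]` generate a free subgroup of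
rank 2 in `SL(2,ℤ)`: the homomorphism from the free group on two generators to `SL(2,ℤ)`
sending the generators to `A` and `B` respectively is injective. -/
theorem free_subgroup_of_SL2Z :
    Function.Injective
      ⇑(FreeGroup.lift ![matA, matB] : FreeGroup (Fin 2) →* Matrix.SpecialLinearGroup (Fin 2) ℤ) := by
  set X : Fin 2 → Set ℍ := ![{z | 1 ≤ z.re}, {z | ‖2 * (z : ℂ) - 1‖ ≤ 1}]
  set Y : Fin 2 → Set ℍ := ![{z | z.re ≤ -1}, {z | ‖2 * (z : ℂ) + 1‖ ≤ 1}]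
  have hX : ∀ i, ![matA, matB] i • (Y i)ᶜ ⊆ X i := by
    intro i
    fin_cases i
    exacts [matA_smul_compl_subset, matB_smul_compl_subset]
  have hX_re : ∀ i, X i ⊆ re ⁻¹' Ioi 0 := by
    intro i
    fin_cases i
    · exact fun z (hz : 1 ≤ z.re) => zero_lt_one.trans_le hz
    · exact fun z hz => (Complex.re_mem_Ioo_of_norm_two_mul_sub_one_le z.im_pos hz).1
  have hY_re : ∀ i, Y i ⊆ re ⁻¹' Iio 0 := by
    intro i
    fin_cases i
    · exact fun z (hz : z.re ≤ -1) => hz.trans_lt neg_one_lt_zero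
    · exact fun z hz => (Complex.re_mem_Ioo_of_norm_two_mul_add_one_le z.im_pos hz).2
  refine FreeGroup.injective_lift_of_ping_pong _ X Y
    (fun i => ⟨_, hX i (smul_mem_smul_set fun hI => (hY_re i hI : I.re < 0).ne I_re)⟩)
    ?_ ?_ (fun i j => (Ioi_disjoint_Iio_same.preimage re).mono (hX_re i) (hY_re j)) hX
    (fun i => inv_smul_set_compl_subset_of_smul_set_compl_subset (hX i))
  · exact Fin.pairwise_disjoint_on_two.2 <| disjoint_left.2 fun z (h0 : 1 ≤ z.re) h1 =>
      (Complex.re_mem_Ioo_of_norm_two_mul_sub_one_le z.im_pos h1).2.not_ge h0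
  · exact Fin.pairwise_disjoint_on_two.2 <| disjoint_left.2 fun z (h0 : z.re ≤ -1) h1 =>
      (Complex.re_mem_Ioo_of_norm_two_mul_add_one_le z.im_pos h1).1.not_ge h0
end

section
/- Let (p₁,q₁), (p₂,q₂), (p₃,q₃) be primitive pairs with q₁, q₂, q₃ all even, |p₁q₂ − p₂q₁| = 2 and |p₃q₂ − p₂q₃| = 2. Then there exist an integer k and a sign ε ∈ {1,−1} such that p₃ = ε(p₁ + 2k·p₂) and q₃ = ε(q₁ + 2k·q₂). That is, any two neighbours of a given vertex of W̄₁ differ by ±(identity) plus an even multiple of that vertex. -/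
lemma odd_of_coprime_even {p q : ℤ} (h : IsCoprime p q) (hq : Even q) : Odd p := by
  rcases Int.even_or_odd p with hp | hp
  · exfalso
    have : IsUnit (2 : ℤ) :=
      h.isUnit_of_dvd' hp.two_dvd hq.two_dvd
    rw [Int.isUnit_iff] at this
    omega
  · exact hp

lemma aux_W1bar (p₁ q₁ p₂ q₂ p₃ q₃ ε : ℤ) (h₂ : IsCoprime p₂ q₂) (hq₂ : Even q₂)
    (hε : ε = 1 ∨ ε = -1) (hp₁ : Odd p₁) (hp₃ : Odd p₃)
    (key : q₂ * (p₃ - ε * p₁) = p₂ * (q₃ - ε * q₁)) :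
    ∃ k : ℤ, p₃ = ε * (p₁ + 2 * k * p₂) ∧ q₃ = ε * (q₁ + 2 * k * q₂) := by
  have hp₂ : Odd p₂ := odd_of_coprime_even h₂ hq₂
  have hp₂0 : p₂ ≠ 0 := by
    rintro rfl; have := Int.odd_iff.mp hp₂; omega
  have hdvd : p₂ ∣ p₃ - ε * p₁ := by
    refine h₂.dvd_of_dvd_mul_left ?_
    exact ⟨q₃ - ε * q₁, key⟩
  obtain ⟨m, hm⟩ := hdvd
  have hq : q₃ - ε * q₁ = q₂ * m := by
    have : p₂ * (q₃ - ε * q₁) = p₂ * (q₂ * m) := by rw [← key, hm]; ring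
    exact mul_left_cancel₀ hp₂0 this
  have hεp₁ : Odd (ε * p₁) := by
    rcases hε with rfl | rfl
    · simpa using hp₁
    · simpa using hp₁.neg
  have hmeven : Even m := by
    have h1 : Even (p₂ * m) := hm ▸ hp₃.sub_odd hεp₁
    rcases Int.even_mul.mp h1 with h | h
    · exact absurd hp₂ (Int.not_odd_iff_even.mpr h)
    · exact h
  obtain ⟨t, ht⟩ := hmeven
  have hε2 : ε * ε = 1 := by rcases hε with rfl | rfl <;> norm_num
  refine ⟨ε * t, ?_, ?_⟩
  · have : p₃ - ε * p₁ = p₂ * (t + t) := by rw [hm, ht]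
    linear_combination this - 2 * t * p₂ * hε2
  · have : q₃ - ε * q₁ = q₂ * (t + t) := by rw [hq, ht]
    linear_combination this - 2 * t * q₂ * hε2

/-- Let `(p₁,q₁)`, `(p₂,q₂)`, `(p₃,q₃)` be primitive pairs with all `qᵢ` even,
`|p₁q₂ − p₂q₁| = 2` and `|p₃q₂ − p₂q₃| = 2`.  Then there are an integer `k` and a sign
`ε ∈ {1,−1}` with `p₃ = ε(p₁ + 2k·p₂)` and `q₃ = ε(q₁ + 2k·q₂)`: any two neighbours of a
given vertex of `W̄₁` differ by `±(identity)` plus an even multiple of that vertex. -/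
theorem neighbours_in_W1bar (p₁ q₁ p₂ q₂ p₃ q₃ : ℤ)
    (h₁ : IsCoprime p₁ q₁) (h₂ : IsCoprime p₂ q₂) (h₃ : IsCoprime p₃ q₃)
    (hq₁ : Even q₁) (hq₂ : Even q₂) (hq₃ : Even q₃)
    (e₁ : |p₁ * q₂ - p₂ * q₁| = 2) (e₂ : |p₃ * q₂ - p₂ * q₃| = 2) :
    ∃ (k ε : ℤ), (ε = 1 ∨ ε = -1) ∧
      p₃ = ε * (p₁ + 2 * k * p₂) ∧ q₃ = ε * (q₁ + 2 * k * q₂) := by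
  have hp₁ : Odd p₁ := odd_of_coprime_even h₁ hq₁
  have hp₃ : Odd p₃ := odd_of_coprime_even h₃ hq₃
  rcases abs_eq (by norm_num : (0:ℤ) ≤ 2) |>.mp e₁ with d₁ | d₁ <;>
    rcases abs_eq (by norm_num : (0:ℤ) ≤ 2) |>.mp e₂ with d₃ | d₃
  · obtain ⟨k, hk⟩ := aux_W1bar p₁ q₁ p₂ q₂ p₃ q₃ 1 h₂ hq₂ (Or.inl rfl) hp₁ hp₃
      (by linarith [d₁, d₃, mul_comm q₂ p₃]; )
    exact ⟨k, 1, Or.inl rfl, hk⟩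
  · obtain ⟨k, hk⟩ := aux_W1bar p₁ q₁ p₂ q₂ p₃ q₃ (-1) h₂ hq₂ (Or.inr rfl) hp₁ hp₃
      (by ring_nf; linarith)
    exact ⟨k, -1, Or.inr rfl, hk⟩
  · obtain ⟨k, hk⟩ := aux_W1bar p₁ q₁ p₂ q₂ p₃ q₃ (-1) h₂ hq₂ (Or.inr rfl) hp₁ hp₃
      (by ring_nf; linarith)
    exact ⟨k, -1, Or.inr rfl, hk⟩
  · obtain ⟨k, hk⟩ := aux_W1bar p₁ q₁ p₂ q₂ p₃ q₃ 1 h₂ hq₂ (Or.inl rfl) hp₁ hp₃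
      (by ring_nf; linarith)
    exact ⟨k, 1, Or.inl rfl, hk⟩
end

section
/- Let (p₀,q₀) = (1,0), (p₁,q₁) = (1,2), and let (p₀,q₀), (p₁,q₁), …, (p_n,q_n) be normalized primitive pairs with every qᵢ even, such that |pᵢq_{i+1} − p_{i+1}qᵢ| = 2 for all 0 ≤ i < n and (p_{i+1},q_{i+1}) ≠ (p_{i−1},q_{i−1}) for all 1 ≤ i < n (i.e., the sequence is a minimal edge-path in W̄₁ starting at 1/0, 1/2). Then for all 0 ≤ i < n one has 1 ≤ pᵢ ≤ p_{i+1} and qᵢ < q_{i+1}. -/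
/-- A normalized primitive pair: `p` and `q` are coprime and either `q > 0`, or
`q = 0` and `p = 1`. -/
def NormalizedPrimitive (p q : ℤ) : Prop :=
  IsCoprime p q ∧ (0 < q ∨ (q = 0 ∧ p = 1))

lemma step_lemma (a b c d e f : ℤ) (ha : 1 ≤ a) (hac : a ≤ c) (hb : 0 ≤ b) (hbd : b < d)
    (hoa : Odd a) (hoc : Odd c) (hoe : Odd e)
    (hcop : IsCoprime c d)
    (hnf : 0 < f ∨ (f = 0 ∧ e = 1))
    (h1 : |a * d - c * b| = 2) (h2 : |c * f - e * d| = 2)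
    (hne : ¬(e = a ∧ f = b)) :
    c ≤ e ∧ d < f := by
  have hd : 0 < d := lt_of_le_of_lt hb hbd
  have hc : 0 < c := lt_of_lt_of_le ha hac
  have key : c * (f + b) = (a + e) * d ∨ c * (f - b) = (e - a) * d := by
    rcases (abs_eq (by norm_num : (0:ℤ) ≤ 2)).mp h1 with h1' | h1' <;>
      rcases (abs_eq (by norm_num : (0:ℤ) ≤ 2)).mp h2 with h2' | h2'
    · exact Or.inl (by linear_combination h2' - h1')
    · exact Or.inr (by linear_combination h1' + h2')
    · exact Or.inr (by linear_combination h1' + h2')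
    · exact Or.inl (by linear_combination h2' - h1')
  rcases key with hE | hE
  · obtain ⟨k, hk⟩ := hcop.dvd_of_dvd_mul_right ⟨f + b, hE.symm⟩
    -- hk : a + e = c * k
    have hf : f + b = k * d := by
      have h' : c * (f + b) = c * (k * d) := by rw [hE, hk]; ring
      exact mul_left_cancel₀ (by positivity) h'
    have hek : Even k := by
      have h : Even (c * k) := hk ▸ hoa.add_odd hoe
      rcases Int.even_mul.mp h with h | h
      · exact absurd h (by simpa using hoc)
      · exact h
    obtain ⟨m, hm⟩ := hek
    by_cases hk2 : 2 ≤ k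
    · have h2d : 2 * d ≤ k * d := mul_le_mul_of_nonneg_right hk2 hd.le
      have h2c : 2 * c ≤ k * c := mul_le_mul_of_nonneg_right hk2 hc.le
      constructor
      · nlinarith
      · nlinarith
    · have hk0 : k ≤ 0 := by omega
      have hkd : k * d ≤ 0 := mul_nonpos_of_nonpos_of_nonneg hk0 hd.le
      rcases hnf with hf0 | ⟨hf0, he1⟩
      · linarith
      · have hb0 : b = 0 := by linarith
        have hkd0 : k * d = 0 := by linarith
        have hk00 : k = 0 := by
          rcases mul_eq_zero.mp hkd0 with h | h
          · exact h
          · omega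
        rw [hk00, mul_zero] at hk
        linarith
  · obtain ⟨k, hk⟩ := hcop.dvd_of_dvd_mul_right ⟨f - b, hE.symm⟩
    -- hk : e - a = c * k
    have hf : f - b = k * d := by
      have h' : c * (f - b) = c * (k * d) := by rw [hE, hk]; ring
      exact mul_left_cancel₀ (by positivity) h'
    have hek : Even k := by
      have h : Even (c * k) := hk ▸ hoe.sub_odd hoa
      rcases Int.even_mul.mp h with h | h
      · exact absurd h (by simpa using hoc)
      · exact h
    obtain ⟨m, hm⟩ := hek
    by_cases hk2 : 2 ≤ k
    · have h2d : 2 * d ≤ k * d := mul_le_mul_of_nonneg_right hk2 hd.le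
      have h2c : 2 * c ≤ k * c := mul_le_mul_of_nonneg_right hk2 hc.le
      constructor
      · nlinarith
      · nlinarith
    · by_cases hk00 : k = 0
      · rw [hk00, mul_zero] at hk
        rw [hk00, zero_mul] at hf
        exact absurd ⟨by linarith, by linarith⟩ hne
      · have hk2' : k ≤ -2 := by omega
        have hkd : k * d ≤ -2 * d := mul_le_mul_of_nonneg_right hk2' hd.le
        rcases hnf with hf0 | ⟨hf0, he1⟩
        · linarith
        · linarith

/-- Along a minimal edge-path in `W̄₁` starting at `1/0, 1/2` (a sequence of normalized
primitive pairs with even denominators, consecutive pairs satisfying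
`|pᵢq_{i+1} − p_{i+1}qᵢ| = 2`, and never immediately backtracking), the numerators satisfy
`1 ≤ pᵢ ≤ p_{i+1}` and the denominators are strictly increasing: `qᵢ < q_{i+1}`. -/
theorem minimal_path_monotone (n : ℕ) (hn : 1 ≤ n) (p q : ℕ → ℤ)
    (hp0 : p 0 = 1) (hq0 : q 0 = 0) (hp1 : p 1 = 1) (hq1 : q 1 = 2)
    (hnorm : ∀ i ≤ n, NormalizedPrimitive (p i) (q i))
    (heven : ∀ i ≤ n, Even (q i))
    (hadj : ∀ i < n, |p i * q (i + 1) - p (i + 1) * q i| = 2)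
    (hmin : ∀ i, 1 ≤ i → i < n → (p (i + 1), q (i + 1)) ≠ (p (i - 1), q (i - 1))) :
    ∀ i < n, 1 ≤ p i ∧ p i ≤ p (i + 1) ∧ q i < q (i + 1) := by
  have hodd : ∀ i ≤ n, Odd (p i) := by
    intro i hi
    rcases Int.even_or_odd (p i) with he | ho
    · exfalso
      have h2 : IsUnit (2:ℤ) :=
        (hnorm i hi).1.isUnit_of_dvd' he.two_dvd (heven i hi).two_dvd
      rcases Int.isUnit_iff.mp h2 with h | h <;> omega
    · exact ho
  have hqnn : ∀ i ≤ n, 0 ≤ q i := by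
    intro i hi
    rcases (hnorm i hi).2 with h | ⟨h, _⟩ <;> omega
  intro i
  induction i with
  | zero =>
    intro _
    refine ⟨by rw [hp0], by rw [hp0, hp1], by rw [hq0, hq1]; norm_num⟩
  | succ j ih =>
    intro hi
    have hj : j < n := by omega
    obtain ⟨h1, h2, h3⟩ := ih hj
    have hne : ¬(p (j + 2) = p j ∧ q (j + 2) = q j) := by
      rintro ⟨he, hf⟩
      exact hmin (j + 1) (by omega) hi (by simp [Nat.add_sub_cancel, he, hf])
    obtain ⟨hce, hdf⟩ := step_lemma (p j) (q j) (p (j+1)) (q (j+1)) (p (j+2)) (q (j+2))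
      h1 h2 (hqnn j (by omega)) h3
      (hodd j (by omega)) (hodd (j+1) (by omega)) (hodd (j+2) (by omega))
      (hnorm (j+1) (by omega)).1
      ((hnorm (j+2) (by omega)).2)
      (hadj j hj) (hadj (j+1) hi)
      hne
    exact ⟨le_trans h1 h2, hce, hdf⟩
end

section
/- Let (p₁,q₁) and (p₂,q₂) be primitive pairs with q₁ and q₂ even and |p₁q₂ − p₂q₁| = 2. Then p₂ − p₁ and q₂ − q₁ are even, and the integer matrix M = [[p₁, (p₂−p₁)/2],[q₁, (q₂−q₁)/2]] has determinant ±1. Consequently M ∈ GL(2,ℤ) sends the column vector (1,0) to (p₁,q₁) and the column vector (1,2) to (p₂,q₂); i.e., GL(2,ℤ) acts transitively on the edges of W̄₁. -/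
/-!
Coprimality forces `p₁, p₂` to be odd, so both differences are even and `M` is an integer
matrix with columns `(p₁, q₁)` and `((p₂, q₂) - (p₁, q₁)) / 2`.  Twice its determinant is
`p₁q₂ − p₂q₁ = ±2`.
-/

theorem Int.odd_of_isCoprime_of_even {p q : ℤ} (hpq : IsCoprime p q) (hq : Even q) : Odd p :=
  Int.isCoprime_two_right.mp (hpq.of_isCoprime_of_dvd_right hq.two_dvd)

def edgeMatrix (p₁ q₁ p₂ q₂ : ℤ) : Matrix (Fin 2) (Fin 2) ℤ :=
  !![p₁, (p₂ - p₁) / 2; q₁, (q₂ - q₁) / 2]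

section edgeMatrix

variable {p₁ q₁ p₂ q₂ : ℤ}

theorem two_mul_det_edgeMatrix (hp : Even (p₂ - p₁)) (hq : Even (q₂ - q₁)) :
    2 * (edgeMatrix p₁ q₁ p₂ q₂).det = p₁ * q₂ - p₂ * q₁ := by
  have hp' := Int.two_mul_ediv_two_of_even hp
  have hq' := Int.two_mul_ediv_two_of_even hq
  rw [edgeMatrix, Matrix.det_fin_two_of]
  linear_combination p₁ * hq' - q₁ * hp'

theorem det_edgeMatrix_eq_one_or_neg_one (hp : Even (p₂ - p₁)) (hq : Even (q₂ - q₁))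
    (h : |p₁ * q₂ - p₂ * q₁| = 2) :
    (edgeMatrix p₁ q₁ p₂ q₂).det = 1 ∨ (edgeMatrix p₁ q₁ p₂ q₂).det = -1 := by
  rw [← two_mul_det_edgeMatrix hp hq, abs_mul, abs_two] at h
  exact (abs_eq zero_le_one).mp (by linarith)

theorem edgeMatrix_mulVec_one_zero : (edgeMatrix p₁ q₁ p₂ q₂).mulVec ![1, 0] = ![p₁, q₁] := by
  ext i; fin_cases i <;> simp [edgeMatrix, Matrix.mulVec]

theorem edgeMatrix_mulVec_one_two (hp : Even (p₂ - p₁)) (hq : Even (q₂ - q₁)) :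
    (edgeMatrix p₁ q₁ p₂ q₂).mulVec ![1, 2] = ![p₂, q₂] := by
  have hp' := Int.ediv_two_mul_two_of_even hp
  have hq' := Int.ediv_two_mul_two_of_even hq
  ext i; fin_cases i <;> simp [edgeMatrix, Matrix.mulVec] <;> linarith

end edgeMatrix

/-- Let `(p₁,q₁)` and `(p₂,q₂)` be primitive pairs with `q₁, q₂` even and
`|p₁q₂ − p₂q₁| = 2`.  Then `p₂ − p₁` and `q₂ − q₁` are even, the integer matrix
`M = [[p₁, (p₂−p₁)/2],[q₁, (q₂−q₁)/2]]` has determinant `±1`, and `M` sends the column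
vector `(1,0)` to `(p₁,q₁)` and `(1,2)` to `(p₂,q₂)`; i.e. `GL(2,ℤ)` acts transitively on
the edges of `W̄₁`. -/
theorem GL2Z_transitive_on_edges (p₁ q₁ p₂ q₂ : ℤ)
    (h₁ : IsCoprime p₁ q₁) (h₂ : IsCoprime p₂ q₂)
    (hq₁ : Even q₁) (hq₂ : Even q₂)
    (h : |p₁ * q₂ - p₂ * q₁| = 2) :
    Even (p₂ - p₁) ∧ Even (q₂ - q₁) ∧
    ((!![p₁, (p₂ - p₁) / 2; q₁, (q₂ - q₁) / 2] : Matrix (Fin 2) (Fin 2) ℤ).det = 1 ∨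
      (!![p₁, (p₂ - p₁) / 2; q₁, (q₂ - q₁) / 2] : Matrix (Fin 2) (Fin 2) ℤ).det = -1) ∧
    (!![p₁, (p₂ - p₁) / 2; q₁, (q₂ - q₁) / 2] : Matrix (Fin 2) (Fin 2) ℤ).mulVec ![1, 0] =
      ![p₁, q₁] ∧
    (!![p₁, (p₂ - p₁) / 2; q₁, (q₂ - q₁) / 2] : Matrix (Fin 2) (Fin 2) ℤ).mulVec ![1, 2] =
      ![p₂, q₂] := by
  have hp : Even (p₂ - p₁) :=
    (Int.odd_of_isCoprime_of_even h₂ hq₂).sub_odd (Int.odd_of_isCoprime_of_even h₁ hq₁)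
  have hq : Even (q₂ - q₁) := hq₂.sub hq₁
  exact ⟨hp, hq, det_edgeMatrix_eq_one_or_neg_one hp hq h, edgeMatrix_mulVec_one_zero,
    edgeMatrix_mulVec_one_two hp hq⟩
end

section
/- The simple graph W̄, whose vertices are the normalized primitive pairs and in which (p₁,q₁) and (p₂,q₂) are adjacent if and only if |p₁q₂ − p₂q₁| = 2, is acyclic (contains no cycle); i.e., W̄ is a forest. -/
/-- The type of normalized primitive pairs: coprime `(p,q)` with `q > 0`, or `q = 0`
and `p = 1`.  These correspond bijectively to slopes `p/q ∈ ℚ ∪ {∞}`. -/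
def NPP : Type :=
  {v : ℤ × ℤ // IsCoprime v.1 v.2 ∧ (0 < v.2 ∨ (v.2 = 0 ∧ v.1 = 1))}

/-- The graph `W̄`: vertices are normalized primitive pairs, and `(p₁,q₁)`, `(p₂,q₂)` are
adjacent iff `|p₁q₂ − p₂q₁| = 2`. -/
def Wbar : SimpleGraph NPP where
  Adj u v := |u.1.1 * v.1.2 - v.1.1 * u.1.2| = 2
  symm := by
    constructor
    intro u v h
    rw [abs_sub_comm]
    exact h
  loopless := by
    constructor
    intro v h
    rw [sub_self, abs_zero] at h
    exact absurd h (by norm_num)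

/-!
Order ℤ² lexicographically by `(q, p)`. A vertex of a cycle at which this order is maximal has
two distinct neighbours on the cycle below it, so it suffices that every vertex `v` of `W̄` has
at most one lower neighbour. For two lower neighbours `u`, `w` we have
`cross v u = ± cross v w`, so `u ∓ w` is an integer multiple of the primitive vector `v`; the
bounds `0 < u, w < v` leave only `u = w` or `u + w = v`. The latter is impossible modulo 2:
primitive vectors whose cross product is even are congruent mod 2, so `u + w ≡ 2v ≡ 0` while
`v` is primitive.
-/

namespace SimpleGraph

theorem isAcyclic_of_subsingleton_lower_neighbors {V α : Type*} [LinearOrder α]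
    {G : SimpleGraph V} (f : V → α) (hf : ∀ ⦃u v⦄, G.Adj u v → f u ≠ f v)
    (h : ∀ ⦃v u w⦄, G.Adj v u → G.Adj v w → f u < f v → f w < f v → u = w) :
    G.IsAcyclic := by
  classical
  intro a c hc
  obtain ⟨x, hx, hmax⟩ := c.support.toFinset.exists_max_image f ⟨a, by simp⟩
  rw [List.mem_toFinset] at hx
  have hc' := hc.rotate hx
  set c' := c.rotate x hx
  have lt_of_adj {y} (hy : y ∈ c'.support) (hxy : G.Adj x y) : f y < f x :=
    (hmax y (by simpa [c'] using hy)).lt_of_ne (hf hxy).symm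
  have hsnd : G.Adj x c'.snd := c'.adj_snd hc'.not_nil
  have hpen : G.Adj x c'.penultimate := (c'.adj_penultimate hc'.not_nil).symm
  exact hc'.snd_ne_penultimate <| h hsnd hpen
    (lt_of_adj (c'.getVert_mem_support _) hsnd) (lt_of_adj (c'.getVert_mem_support _) hpen)

end SimpleGraph

def cross (a b : ℤ × ℤ) : ℤ := a.1 * b.2 - b.1 * a.2

/-- The normalized primitive pairs are exactly the primitive vectors with positive `lexKey`. -/
def lexKey : ℤ × ℤ ≃+ ℤ ×ₗ ℤ := AddEquiv.prodComm.trans (toLexAddEquiv _)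

lemma exists_eq_zsmul_of_cross_eq_zero {v x : ℤ × ℤ} (hv : IsCoprime v.1 v.2)
    (h : cross v x = 0) : ∃ k : ℤ, x = k • v := by
  obtain ⟨a, b, hab⟩ := hv
  unfold cross at h
  refine ⟨a * x.1 + b * x.2, Prod.ext ?_ ?_⟩
  · simp only [Prod.smul_fst, smul_eq_mul]
    linear_combination (-x.1) * hab - b * h
  · simp only [Prod.smul_snd, smul_eq_mul]
    linear_combination (-x.2) * hab + a * h

lemma IsCoprime.not_even_and_even {a b : ℤ} (h : IsCoprime a b) : ¬ (Even a ∧ Even b) := by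
  rintro ⟨ha, hb⟩
  have := Int.isUnit_iff.mp (h.isUnit_of_dvd' ha.two_dvd hb.two_dvd)
  omega

lemma even_iff_even_of_even_cross {a b : ℤ × ℤ} (ha : IsCoprime a.1 a.2)
    (hb : IsCoprime b.1 b.2) (h : Even (cross a b)) :
    (Even a.1 ↔ Even b.1) ∧ (Even a.2 ↔ Even b.2) := by
  have ha := ha.not_even_and_even
  have hb := hb.not_even_and_even
  simp only [cross, Int.even_sub, Int.even_mul] at h
  tauto

lemma eq_of_cross_eq_cross {v u w : ℤ × ℤ} (hv : IsCoprime v.1 v.2) (h : cross v u = cross v w)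
    (hu : lexKey u ∈ Set.Ioo 0 (lexKey v)) (hw : lexKey w ∈ Set.Ioo 0 (lexKey v)) : u = w := by
  obtain ⟨k, hk⟩ := exists_eq_zsmul_of_cross_eq_zero hv (x := u - w) <| by
    simp only [cross, Prod.fst_sub, Prod.snd_sub] at h ⊢
    linarith
  have hkey : lexKey u - lexKey w = k • lexKey v := by rw [← map_sub, hk, map_zsmul]
  have hv0 : 0 < lexKey v := hu.1.trans hu.2
  have hk0 : k = 0 := by
    have h1 : (-1 : ℤ) • lexKey v < k • lexKey v := by
      simpa [← hkey] using sub_lt_sub hu.1 hw.2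
    have h2 : k • lexKey v < (1 : ℤ) • lexKey v := by
      simpa [← hkey] using sub_lt_sub hu.2 hw.1
    rw [zsmul_lt_zsmul_iff_left hv0] at h1 h2
    omega
  rwa [hk0, zero_smul, sub_eq_zero] at hk

lemma add_eq_of_cross_eq_neg_cross {v u w : ℤ × ℤ} (hv : IsCoprime v.1 v.2)
    (h : cross v u = -cross v w) (hu : lexKey u ∈ Set.Ioo 0 (lexKey v))
    (hw : lexKey w ∈ Set.Ioo 0 (lexKey v)) : u + w = v := by
  obtain ⟨k, hk⟩ := exists_eq_zsmul_of_cross_eq_zero hv (x := u + w) <| by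
    simp only [cross, Prod.fst_add, Prod.snd_add] at h ⊢
    linarith
  have hkey : lexKey u + lexKey w = k • lexKey v := by rw [← map_add, hk, map_zsmul]
  have hv0 : 0 < lexKey v := hu.1.trans hu.2
  have hk1 : k = 1 := by
    have h1 : (0 : ℤ) • lexKey v < k • lexKey v := by
      rw [zero_smul, ← hkey]
      exact add_pos hu.1 hw.1
    have h2 : k • lexKey v < (2 : ℤ) • lexKey v := by
      rw [two_zsmul, ← hkey]
      exact add_lt_add hu.2 hw.2
    rw [zsmul_lt_zsmul_iff_left hv0] at h1 h2
    omega
  rwa [hk1, one_smul] at hk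

lemma add_ne_of_even_cross {v u w : ℤ × ℤ} (hv : IsCoprime v.1 v.2) (hu : IsCoprime u.1 u.2)
    (hw : IsCoprime w.1 w.2) (hvu : Even (cross v u)) (hvw : Even (cross v w)) : u + w ≠ v := by
  rintro rfl
  have hu' := even_iff_even_of_even_cross hv hu hvu
  have hw' := even_iff_even_of_even_cross hv hw hvw
  apply hv.not_even_and_even
  simp only [Prod.fst_add, Prod.snd_add, Int.even_add] at hu' hw' ⊢
  tauto

lemma eq_of_abs_cross_eq_two {v u w : ℤ × ℤ} (hv : IsCoprime v.1 v.2) (hu : IsCoprime u.1 u.2)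
    (hw : IsCoprime w.1 w.2) (hvu : |cross v u| = 2) (hvw : |cross v w| = 2)
    (hu' : lexKey u ∈ Set.Ioo 0 (lexKey v)) (hw' : lexKey w ∈ Set.Ioo 0 (lexKey v)) :
    u = w := by
  obtain h | h := abs_eq_abs.mp (hvu.trans hvw.symm)
  · exact eq_of_cross_eq_cross hv h hu' hw'
  · have hvu_even : Even (cross v u) := even_abs.mp (hvu ▸ even_two)
    have hvw_even : Even (cross v w) := even_abs.mp (hvw ▸ even_two)
    exact absurd (add_eq_of_cross_eq_neg_cross hv h hu' hw')
      (add_ne_of_even_cross hv hu hw hvu_even hvw_even)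

lemma NPP.lexKey_pos (v : NPP) : 0 < lexKey v.1 := by
  obtain ⟨⟨p, q⟩, -, hv⟩ := v
  change toLex (0, 0) < toLex (q, p)
  rw [Prod.Lex.toLex_lt_toLex]
  omega

lemma Wbar.eq_of_adj_of_lexKey_lt {v u w : NPP} (hu : Wbar.Adj v u) (hw : Wbar.Adj v w)
    (hu' : lexKey u.1 < lexKey v.1) (hw' : lexKey w.1 < lexKey v.1) : u = w :=
  Subtype.ext <| eq_of_abs_cross_eq_two v.2.1 u.2.1 w.2.1 hu hw
    ⟨u.lexKey_pos, hu'⟩ ⟨w.lexKey_pos, hw'⟩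

/-- The graph `W̄` contains no cycle, i.e. it is a forest. -/
theorem Wbar_isAcyclic : Wbar.IsAcyclic :=
  SimpleGraph.isAcyclic_of_subsingleton_lower_neighbors (fun v : NPP ↦ lexKey v.1)
    (fun _ _ h ↦ (lexKey.injective.comp Subtype.val_injective).ne h.ne)
    fun _ _ _ ↦ Wbar.eq_of_adj_of_lexKey_lt
end

section
/- The subgraph W̄₁ of W̄ induced on the class W₁ = {(p,q) : q even} is connected: for every normalized primitive pair (p,q) with q even there is a finite sequence of normalized primitive pairs with even second coordinate, starting at (1,0) and ending at (p,q), in which consecutive pairs (p',q'), (p'',q'') satisfy |p'q'' − p''q'| = 2. -/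
/-!
Write `q = 2m`; then `p` is odd and coprime to `m`. If `m = 1`, the pair `(p, 2)` is adjacent
to `(1, 0)`. Otherwise Bézout gives `(a, b)` with `p b - a m = 1` and `0 < b < m`, and so does
`(p - a, m - b)` up to sign; since `p` is odd, one of `a`, `p - a` is odd, and the corresponding
pair `(a', 2b')` lies in `W₁`, is adjacent to `(p, q)` and has smaller second coordinate.
Descending on `q` reaches `(1, 0)`.
-/

theorem Int.exists_mul_sub_mul_eq_one_of_isCoprime {p m : ℤ} (h : IsCoprime p m) (hm : 1 < m) :
    ∃ a b, p * b - a * m = 1 ∧ 0 < b ∧ b < m := by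
  obtain ⟨u, v, huv⟩ := h
  have hdiv := Int.emod_add_mul_ediv u m
  have hdet : p * (u % m) - -(v + p * (u / m)) * m = 1 := by linear_combination huv + p * hdiv
  refine ⟨_, _, hdet, ?_, Int.emod_lt_of_pos u (by omega)⟩
  refine (Int.emod_nonneg u (by omega)).lt_of_ne fun h0 => ?_
  rw [← h0] at hdet
  have : m ∣ 1 := ⟨v + p * (u / m), by linarith⟩
  linarith [Int.le_of_dvd one_pos this]

theorem Int.exists_odd_abs_mul_sub_mul_eq_one {p m : ℤ} (hp : Odd p) (h : IsCoprime p m)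
    (hm : 1 < m) : ∃ a b, Odd a ∧ |p * b - a * m| = 1 ∧ 0 < b ∧ b < m := by
  obtain ⟨a, b, hdet, hb0, hbm⟩ := Int.exists_mul_sub_mul_eq_one_of_isCoprime h hm
  rcases Int.even_or_odd a with ha | ha
  · refine ⟨p - a, m - b, hp.sub_even ha, ?_, by omega, by omega⟩
    rw [show p * (m - b) - (p - a) * m = -1 by linear_combination -hdet]
    simp
  · exact ⟨a, b, ha, by simp [hdet], hb0, hbm⟩

theorem Int.isCoprime_of_abs_mul_sub_mul_eq_one {p m a b : ℤ} (h : |p * b - a * m| = 1) :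
    IsCoprime a b := by
  obtain ⟨ε, hε⟩ : ∃ ε, p * b - a * m = ε := ⟨_, rfl⟩
  rw [hε] at h
  have hεε : ε * ε = 1 := by rw [← abs_mul_abs_self, h, one_mul]
  exact ⟨-ε * m, ε * p, by linear_combination ε * hε + hεε⟩

def detTwoGraph : SimpleGraph (ℤ × ℤ) where
  Adj u v := |u.1 * v.2 - v.1 * u.2| = 2
  symm := ⟨fun u v h => by rwa [abs_sub_comm]⟩
  loopless := ⟨fun u h => by simp at h⟩

def IsNormalizedPrimitive (v : ℤ × ℤ) : Prop :=
  IsCoprime v.1 v.2 ∧ (0 < v.2 ∨ v.2 = 0 ∧ v.1 = 1)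

def W₁ : Set (ℤ × ℤ) := {v | IsNormalizedPrimitive v ∧ Even v.2}

abbrev W₁bar : SimpleGraph W₁ := detTwoGraph.induce W₁

def W₁.origin : W₁ := ⟨(1, 0), ⟨isCoprime_one_left, .inr ⟨rfl, rfl⟩⟩, Even.zero⟩

theorem W₁.exists_adj_snd_lt {p q : ℤ} (hv : (p, q) ∈ W₁) (hq0 : 0 < q) :
    ∃ w : W₁, detTwoGraph.Adj w (p, q) ∧ w.1.2 < q := by
  obtain ⟨⟨hcop, -⟩, hq⟩ := hv
  obtain ⟨m, rfl⟩ := even_iff_two_dvd.mp hq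
  have hp : Odd p := Int.isCoprime_two_right.mp hcop.of_mul_right_left
  obtain rfl | hm : m = 1 ∨ 1 < m := by omega
  · exact ⟨W₁.origin, by simp [detTwoGraph, W₁.origin], by simp [W₁.origin]⟩
  obtain ⟨a, b, ha, hdet, hb0, hbm⟩ :=
    Int.exists_odd_abs_mul_sub_mul_eq_one hp hcop.of_mul_right_right hm
  have hmem : (a, 2 * b) ∈ W₁ :=
    ⟨⟨(Int.isCoprime_two_right.mpr ha).mul_right (Int.isCoprime_of_abs_mul_sub_mul_eq_one hdet),
      .inl (by dsimp only; omega)⟩, even_two_mul b⟩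
  refine ⟨⟨_, hmem⟩, ?_, by dsimp only; omega⟩
  change |a * (2 * m) - p * (2 * b)| = 2
  rw [show a * (2 * m) - p * (2 * b) = -2 * (p * b - a * m) by ring, abs_mul, hdet]
  norm_num

theorem W₁bar.reachable_origin (v : W₁) : W₁bar.Reachable W₁.origin v := by
  obtain ⟨⟨p, q⟩, hv⟩ := v
  induction hn : q.toNat using Nat.strong_induction_on generalizing p q with
  | _ n ih =>
    obtain hq0 | ⟨rfl, rfl⟩ := hv.1.2
    · obtain ⟨w, hadj, hlt⟩ := W₁.exists_adj_snd_lt hv hq0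
      have hw : 0 ≤ w.1.2 := w.2.1.2.elim (fun h => h.le) (fun h => h.1.ge)
      exact (ih _ (by omega) w.1.1 w.1.2 w.2 rfl).trans (SimpleGraph.Adj.reachable hadj)
    · rfl

theorem W₁bar.connected : W₁bar.Connected :=
  SimpleGraph.connected_iff_exists_forall_reachable _ |>.mpr ⟨W₁.origin, reachable_origin⟩

/-- The subgraph `W̄₁` of `W̄` induced on `W₁ = {(p,q) : q even}` is connected: every
normalized primitive pair `(p,q)` with `q` even can be joined to `(1,0)` by a finite
sequence of normalized primitive pairs with even second coordinate in which consecutive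
pairs `(p',q')`, `(p'',q'')` satisfy `|p'q'' − p''q'| = 2`. -/
theorem W1bar_connected (p q : ℤ)
    (hcop : IsCoprime p q) (hnorm : 0 < q ∨ (q = 0 ∧ p = 1)) (hq : Even q) :
    ∃ (n : ℕ) (f g : ℕ → ℤ),
      f 0 = 1 ∧ g 0 = 0 ∧ f n = p ∧ g n = q ∧
      (∀ i ≤ n, IsCoprime (f i) (g i) ∧ (0 < g i ∨ (g i = 0 ∧ f i = 1)) ∧ Even (g i)) ∧
      (∀ i < n, |f i * g (i + 1) - f (i + 1) * g i| = 2) := by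
  obtain ⟨w⟩ := W₁bar.connected W₁.origin ⟨(p, q), ⟨hcop, hnorm⟩, hq⟩
  refine ⟨w.length, fun i => (w.getVert i).1.1, fun i => (w.getVert i).1.2, ?_, ?_, ?_, ?_,
    fun i _ => and_assoc.mp (w.getVert i).2, fun i hi => w.adj_getVert_succ hi⟩ <;>
  simp only [w.getVert_zero, w.getVert_length] <;> rfl
end

section
/- The graph W̄ is a forest with exactly three connected components: its vertex set is the disjoint union of the parity classes W₀, W₁, W₂, there are no edges between distinct classes, and for each i ∈ {0,1,2} the induced subgraph W̄ᵢ is a tree (connected and acyclic). -/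
/-- The parity class `W₀ = {(p,q) : p and q both odd}`. -/
def W0 : Set NPP := {v | Odd v.1.1 ∧ Odd v.1.2}

/-- The parity class `W₁ = {(p,q) : q even}`. -/
def W1 : Set NPP := {v | Even v.1.2}

/-- The parity class `W₂ = {(p,q) : p even}`. -/
def W2 : Set NPP := {v | Even v.1.1}

/-! The lexicographic rank `(q, |2p - 1|)` orients `W̄`: adjacent vertices have different
ranks, every vertex other than `(1,0)`, `(1,1)`, `(0,1)` has a neighbour of smaller rank, and no
vertex has two. A lower neighbour comes from a solution of `ps - rq = 2` with `0 ≤ s < q`; it is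
unique because such a solution is determined by `s mod q`, and the two solutions `(r,s)`,
`(p-r,q-s)` of `ps - rq = ±2` cannot both be congruent to `(p,q)` mod 2, as adjacency requires.
So a cycle would leave its vertex of maximal rank along two lower edges, and every vertex
descends to the root of its parity class, which adjacency never leaves. -/

namespace SimpleGraph

variable {V α : Type*} {G : SimpleGraph V} [LinearOrder α] {f : V → α}

theorem isAcyclic_of_rank (hne : ∀ ⦃u v⦄, G.Adj u v → f u ≠ f v)
    (huniq : ∀ ⦃v u w⦄, G.Adj v u → G.Adj v w → f u < f v → f w < f v → u = w) :
    G.IsAcyclic := by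
  classical
  intro x c hc
  obtain ⟨m, hm, hmax⟩ := c.support.toFinset.exists_max_image f ⟨x, by simp⟩
  rw [List.mem_toFinset] at hm
  set c' := c.rotate m hm
  have hc' : c'.IsCycle := hc.rotate hm
  have hlow (i : ℕ) (hy : G.Adj m (c'.getVert i)) : f (c'.getVert i) < f m := by
    have hi : c'.getVert i ∈ c.support :=
      (c.mem_support_rotate_iff m hm).mp (c'.getVert_mem_support i)
    exact (hmax _ (List.mem_toFinset.mpr hi)).lt_of_ne (hne hy).symm
  have hsnd := c'.adj_snd hc'.not_nil
  have hpen := (c'.adj_penultimate hc'.not_nil).symm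
  exact hc'.snd_ne_penultimate (huniq hsnd hpen (hlow _ hsnd) (hlow _ hpen))

theorem connected_of_rank [WellFoundedLT α] (r : V)
    (hdesc : ∀ v, v ≠ r → ∃ u, G.Adj v u ∧ f u < f v) : G.Connected := by
  have reach (v : V) : G.Reachable r v := by
    induction v using (InvImage.wf f wellFounded_lt).induction with
    | h v ih =>
      by_cases hv : v = r
      · exact hv ▸ .rfl
      · obtain ⟨u, hadj, hlt⟩ := hdesc v hv
        exact (ih u hlt).trans hadj.symm.reachable
  exact (connected_iff_exists_forall_reachable G).mpr ⟨r, reach⟩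

end SimpleGraph

theorem IsCoprime.not_even_and_even_s8 {p q : ℤ} (h : IsCoprime p q) : ¬ (Even p ∧ Even q) := by
  rintro ⟨hp, hq⟩
  have := Int.isUnit_iff.mp (h.isUnit_of_dvd' hp.two_dvd hq.two_dvd)
  omega

theorem isCoprime_of_linear_combination_eq_two {a b r s : ℤ} (h : a * r + b * s = 2)
    (hrs : ¬ (Even r ∧ Even s)) : IsCoprime r s := by
  rw [Int.isCoprime_iff_gcd_eq_one]
  have hdvd : (Int.gcd r s : ℤ) ∣ 2 :=
    h ▸ dvd_add (Int.gcd_dvd_left r s |>.mul_left a) (Int.gcd_dvd_right r s |>.mul_left b)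
  rcases (Nat.dvd_prime Nat.prime_two).mp (Int.natCast_dvd_ofNat.mp hdvd) with h1 | h2
  · exact h1
  · refine absurd ⟨?_, ?_⟩ hrs <;> rw [even_iff_two_dvd, ← Nat.cast_ofNat, ← h2]
    exacts [Int.gcd_dvd_left r s, Int.gcd_dvd_right r s]

theorem exists_mul_sub_mul_eq_two {p q : ℤ} (hpq : IsCoprime p q) (hq : 0 < q) :
    ∃ r s, p * s - r * q = 2 ∧ 0 ≤ s ∧ s < q := by
  obtain ⟨a, b, hab⟩ := hpq
  refine ⟨-(2 * b + p * (2 * a / q)), 2 * a % q, ?_, Int.emod_nonneg _ hq.ne',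
    Int.emod_lt_of_pos _ hq⟩
  linear_combination 2 * hab + p * Int.mul_ediv_add_emod (2 * a) q

theorem eq_of_mul_sub_mul_eq {p q r s r' s' : ℤ} (hpq : IsCoprime p q)
    (h : p * s - r * q = p * s' - r' * q) (hs : |s - s'| < q) : r = r' ∧ s = s' := by
  have hdvd : q ∣ s - s' := hpq.symm.dvd_of_dvd_mul_left ⟨r - r', by linear_combination h⟩
  have hss : s = s' := sub_eq_zero.mp (Int.eq_zero_of_abs_lt_dvd hdvd hs)
  subst hss
  have hq : q ≠ 0 := by have := abs_nonneg (s - s); omega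
  exact ⟨mul_right_cancel₀ hq (by linarith), rfl⟩

def NPP.ofInt (p : ℤ) : NPP := ⟨(p, 1), isCoprime_one_right, Or.inl one_pos⟩

def NPP.infinity : NPP := ⟨(1, 0), isCoprime_one_left, Or.inr ⟨rfl, rfl⟩⟩

theorem NPP.ext_iff {u v : NPP} : u = v ↔ u.1.1 = v.1.1 ∧ u.1.2 = v.1.2 :=
  Subtype.ext_iff.trans Prod.ext_iff

theorem NPP.ext {u v : NPP} (hp : u.1.1 = v.1.1) (hq : u.1.2 = v.1.2) : u = v :=
  NPP.ext_iff.mpr ⟨hp, hq⟩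

theorem NPP.q_nonneg (v : NPP) : 0 ≤ v.1.2 := by
  rcases v.2.2 with h | h <;> omega

theorem NPP.p_eq_one_of_q_eq_zero {v : NPP} (h : v.1.2 = 0) : v.1.1 = 1 := by
  rcases v.2.2 with h' | h' <;> omega

theorem Wbar_adj_iff {u v : NPP} : Wbar.Adj u v ↔ |u.1.1 * v.1.2 - v.1.1 * u.1.2| = 2 :=
  Iff.rfl

theorem even_sub_of_Wbar_adj {u v : NPP} (h : Wbar.Adj u v) :
    Even (u.1.1 - v.1.1) ∧ Even (u.1.2 - v.1.2) := by
  have hdet : Even (u.1.1 * v.1.2 - v.1.1 * u.1.2) := by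
    rw [← even_abs, Wbar_adj_iff.mp h]; exact even_two
  have hu := u.2.1.not_even_and_even_s8
  have hv := v.2.1.not_even_and_even_s8
  simp only [Int.even_sub, Int.even_mul] at hdet ⊢
  tauto

theorem mem_parity_classes (v : NPP) :
    (v ∈ W0 ∧ v ∉ W1 ∧ v ∉ W2) ∨ (v ∈ W1 ∧ v ∉ W0 ∧ v ∉ W2) ∨
      (v ∈ W2 ∧ v ∉ W0 ∧ v ∉ W1) := by
  have hv := v.2.1.not_even_and_even_s8
  simp only [W0, W1, W2, Set.mem_ofPred_eq, ← Int.not_even_iff_odd]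
  tauto

theorem mem_parity_classes_iff_of_Wbar_adj {u v : NPP} (h : Wbar.Adj u v) :
    (u ∈ W0 ↔ v ∈ W0) ∧ (u ∈ W1 ↔ v ∈ W1) ∧ (u ∈ W2 ↔ v ∈ W2) := by
  have := even_sub_of_Wbar_adj h
  simp only [W0, W1, W2, Set.mem_ofPred_eq, ← Int.not_even_iff_odd, Int.even_sub] at this ⊢
  tauto

/-- `2p - 1` measures the distance of `p` from `1/2`, so that in the row `q = 1` both `(0,1)` and
`(1,1)` are minimal. -/
def NPP.rank (v : NPP) : ℕ ×ₗ ℕ := toLex (v.1.2.toNat, (2 * v.1.1 - 1).natAbs)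

theorem NPP.rank_lt_rank_iff {u v : NPP} :
    u.rank < v.rank ↔
      u.1.2 < v.1.2 ∨ (u.1.2 = v.1.2 ∧ (2 * u.1.1 - 1).natAbs < (2 * v.1.1 - 1).natAbs) := by
  have := u.q_nonneg
  have := v.q_nonneg
  rw [NPP.rank, NPP.rank, Prod.Lex.toLex_lt_toLex]
  omega

theorem Wbar_adj_of_q_eq {u v : NPP} (h : Wbar.Adj u v) (hq : u.1.2 = v.1.2) :
    v.1.2 = 1 ∧ (u.1.1 = v.1.1 + 2 ∨ u.1.1 = v.1.1 - 2) := by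
  obtain ⟨⟨k, hk⟩, -⟩ := even_sub_of_Wbar_adj h
  have hdet := Wbar_adj_iff.mp h
  rw [hq] at hdet
  have e : u.1.1 * v.1.2 - v.1.1 * v.1.2 = 2 * (v.1.2 * k) := by linear_combination v.1.2 * hk
  rw [e, abs_eq zero_le_two] at hdet
  have := v.q_nonneg
  rcases hdet with h | h
  · rcases Int.eq_one_or_neg_one_of_mul_eq_one' (by omega : v.1.2 * k = 1) with h | h <;> omega
  · rcases Int.eq_one_or_neg_one_of_mul_eq_neg_one' (by omega : v.1.2 * k = -1) with h | h <;>
      omega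

theorem two_le_q_of_Wbar_adj_of_q_lt {u v : NPP} (h : Wbar.Adj v u) (hq : u.1.2 < v.1.2) :
    2 ≤ v.1.2 := by
  by_contra! hv
  have hu0 : u.1.2 = 0 := by have := u.q_nonneg; omega
  have hdet := Wbar_adj_iff.mp h
  rw [hu0, NPP.p_eq_one_of_q_eq_zero hu0, show v.1.2 = 1 by omega] at hdet
  norm_num at hdet

theorem NPP.rank_ne_of_Wbar_adj {u v : NPP} (h : Wbar.Adj u v) : u.rank ≠ v.rank := by
  intro hr
  have hq : u.1.2.toNat = v.1.2.toNat := congrArg (fun x => (ofLex x).1) hr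
  have hp : (2 * u.1.1 - 1).natAbs = (2 * v.1.1 - 1).natAbs :=
    congrArg (fun x => (ofLex x).2) hr
  have := u.q_nonneg
  have := v.q_nonneg
  have := (Wbar_adj_of_q_eq h (by omega)).2
  omega

theorem exists_Wbar_adj_q_lt {v : NPP} (hq : 2 < v.1.2) :
    ∃ u, Wbar.Adj v u ∧ u.1.2 < v.1.2 := by
  obtain ⟨r, s, hrs, hs0, hsq⟩ := exists_mul_sub_mul_eq_two v.2.1 (by omega)
  have hs : s ≠ 0 := by
    rintro rfl
    have := Int.le_of_dvd two_pos (show v.1.2 ∣ 2 from ⟨-r, by linear_combination -hrs⟩)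
    omega
  -- `(r,s)` and `v - (r,s)` are not both even, so one of them is a vertex
  by_cases hev : Even r ∧ Even s
  · have hv := v.2.1.not_even_and_even_s8
    refine ⟨⟨(v.1.1 - r, v.1.2 - s), isCoprime_of_linear_combination_eq_two
      (a := v.1.2) (b := -v.1.1) (by linear_combination hrs) ?_, Or.inl (by omega)⟩, ?_, ?_⟩
    · rintro ⟨h1, h2⟩
      exact hv ⟨by simpa using h1.add hev.1, by simpa using h2.add hev.2⟩
    · change |v.1.1 * (v.1.2 - s) - (v.1.1 - r) * v.1.2| = 2
      rw [show v.1.1 * (v.1.2 - s) - (v.1.1 - r) * v.1.2 = -2 by linear_combination -hrs]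
      norm_num
    · change v.1.2 - s < v.1.2
      omega
  · refine ⟨⟨(r, s), isCoprime_of_linear_combination_eq_two
      (a := -v.1.2) (b := v.1.1) (by linear_combination hrs) hev, Or.inl (by omega)⟩, ?_, hsq⟩
    change |v.1.1 * s - r * v.1.2| = 2
    rw [hrs, abs_two]

theorem exists_Wbar_adj_rank_lt {v : NPP} (hv : 1 < v.1.2 ∨ (v.1.1 ≠ 0 ∧ v.1.1 ≠ 1)) :
    ∃ u, Wbar.Adj v u ∧ u.rank < v.rank := by
  simp only [NPP.rank_lt_rank_iff]
  have := v.q_nonneg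
  rcases lt_trichotomy v.1.2 2 with hq | hq | hq
  · have hq1 : v.1.2 = 1 := by
      have := NPP.p_eq_one_of_q_eq_zero (v := v)
      omega
    obtain ⟨d, hd, hp⟩ : ∃ d : ℤ, (d = 2 ∨ d = -2) ∧
        (2 * (v.1.1 - d) - 1).natAbs < (2 * v.1.1 - 1).natAbs := by
      by_cases hp : 0 < v.1.1
      · exact ⟨2, by simp, by omega⟩
      · exact ⟨-2, by simp, by omega⟩
    refine ⟨NPP.ofInt (v.1.1 - d), ?_, Or.inr ⟨hq1.symm, hp⟩⟩
    change |v.1.1 * 1 - (v.1.1 - d) * v.1.2| = 2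
    rcases hd with rfl | rfl <;> simp [hq1]
  · refine ⟨NPP.infinity, ?_, Or.inl (by change (0 : ℤ) < _; omega)⟩
    change |v.1.1 * 0 - 1 * v.1.2| = 2
    simp [hq]
  · obtain ⟨u, hu, huq⟩ := exists_Wbar_adj_q_lt hq
    exact ⟨u, hu, Or.inl huq⟩

theorem eq_of_Wbar_adj_q_lt {v u w : NPP} (hu : Wbar.Adj v u) (hw : Wbar.Adj v w)
    (huq : u.1.2 < v.1.2) (hwq : w.1.2 < v.1.2) : u = w := by
  have := u.q_nonneg
  have := w.q_nonneg
  have hdet : |v.1.1 * u.1.2 - u.1.1 * v.1.2| = |v.1.1 * w.1.2 - w.1.1 * v.1.2| :=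
    (Wbar_adj_iff.mp hu).trans (Wbar_adj_iff.mp hw).symm
  rcases abs_eq_abs.mp hdet with h | h
  · obtain ⟨hp, hq⟩ :=
      eq_of_mul_sub_mul_eq v.2.1 h (abs_sub_lt_iff.mpr ⟨by omega, by omega⟩)
    exact NPP.ext hp hq
  · by_cases h0 : u.1.2 = 0 ∧ w.1.2 = 0
    · rw [NPP.ext_iff, NPP.p_eq_one_of_q_eq_zero h0.1, NPP.p_eq_one_of_q_eq_zero h0.2]
      omega
    -- otherwise `u + w = v`, which is impossible as `u`, `v`, `w` are congruent mod 2
    obtain ⟨hp, hq⟩ := eq_of_mul_sub_mul_eq (r := u.1.1) (s := u.1.2) (r' := v.1.1 - w.1.1)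
      (s' := v.1.2 - w.1.2) v.2.1 (by linear_combination h)
      (abs_sub_lt_iff.mpr ⟨by omega, by omega⟩)
    obtain ⟨⟨a, ha⟩, ⟨b, hb⟩⟩ := even_sub_of_Wbar_adj hu
    obtain ⟨⟨c, hc⟩, ⟨d, hd⟩⟩ := even_sub_of_Wbar_adj hw
    exact absurd ⟨⟨a + c, by omega⟩, ⟨b + d, by omega⟩⟩ v.2.1.not_even_and_even_s8

theorem eq_of_Wbar_adj_rank_lt {v u w : NPP} (hu : Wbar.Adj v u) (hw : Wbar.Adj v w)
    (hru : u.rank < v.rank) (hrw : w.rank < v.rank) : u = w := by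
  rw [NPP.rank_lt_rank_iff] at hru hrw
  rcases hru with hru | ⟨hqu, hpu⟩ <;> rcases hrw with hrw | ⟨hqw, hpw⟩
  · exact eq_of_Wbar_adj_q_lt hu hw hru hrw
  · have := two_le_q_of_Wbar_adj_of_q_lt hu hru
    have := (Wbar_adj_of_q_eq hw.symm hqw).1
    omega
  · have := two_le_q_of_Wbar_adj_of_q_lt hw hrw
    have := (Wbar_adj_of_q_eq hu.symm hqu).1
    omega
  · have := (Wbar_adj_of_q_eq hu.symm hqu).2
    have := (Wbar_adj_of_q_eq hw.symm hqw).2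
    exact NPP.ext (by omega) (hqu.trans hqw.symm)

theorem Wbar_induce_connected {s : Set NPP}
    (hs : ∀ ⦃u v⦄, Wbar.Adj u v → u ∈ s → v ∈ s) (r : s)
    (hr : ∀ v ∈ s, v ≠ r.1 → 1 < v.1.2 ∨ (v.1.1 ≠ 0 ∧ v.1.1 ≠ 1)) :
    (Wbar.induce s).Connected := by
  refine SimpleGraph.connected_of_rank (f := fun v : s => v.1.rank) r fun v hv => ?_
  obtain ⟨u, hadj, hlt⟩ := exists_Wbar_adj_rank_lt (hr v.1 v.2 (Subtype.coe_ne_coe.mpr hv))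
  exact ⟨⟨u, hs hadj v.2⟩, hadj, hlt⟩

theorem W0_connected : (Wbar.induce W0).Connected := by
  refine Wbar_induce_connected (fun _ _ h => (mem_parity_classes_iff_of_Wbar_adj h).1.1)
    ⟨NPP.ofInt 1, odd_one, odd_one⟩ fun v ⟨⟨a, ha⟩, ⟨b, hb⟩⟩ hv => ?_
  have := v.q_nonneg
  by_contra! h
  exact hv (NPP.ext (show v.1.1 = 1 by omega) (show v.1.2 = 1 by omega))

theorem W1_connected : (Wbar.induce W1).Connected := by
  refine Wbar_induce_connected (fun _ _ h => (mem_parity_classes_iff_of_Wbar_adj h).2.1.1)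
    ⟨NPP.infinity, Even.zero⟩ fun v ⟨b, hb⟩ hv => ?_
  have := v.q_nonneg
  by_contra! h
  have hq : v.1.2 = 0 := by omega
  exact hv (NPP.ext (NPP.p_eq_one_of_q_eq_zero hq) hq)

theorem W2_connected : (Wbar.induce W2).Connected := by
  refine Wbar_induce_connected (fun _ _ h => (mem_parity_classes_iff_of_Wbar_adj h).2.2.1)
    ⟨NPP.ofInt 0, Even.zero⟩ fun v ⟨a, ha⟩ hv => ?_
  have := v.q_nonneg
  have := NPP.p_eq_one_of_q_eq_zero (v := v)
  by_contra! h
  exact hv (NPP.ext (show v.1.1 = 0 by omega) (show v.1.2 = 1 by omega))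

/-- `W̄` is a forest with exactly three connected components: its vertex set is the
disjoint union of the parity classes `W₀, W₁, W₂`, there are no edges between distinct
classes, and each induced subgraph `W̄ᵢ` is a tree (connected and acyclic). -/
theorem Wbar_forest_three_trees :
    (∀ v : NPP,
      (v ∈ W0 ∧ v ∉ W1 ∧ v ∉ W2) ∨ (v ∈ W1 ∧ v ∉ W0 ∧ v ∉ W2) ∨
        (v ∈ W2 ∧ v ∉ W0 ∧ v ∉ W1)) ∧
    (∀ u v : NPP, Wbar.Adj u v →
      ((u ∈ W0 ∧ v ∈ W0) ∨ (u ∈ W1 ∧ v ∈ W1) ∨ (u ∈ W2 ∧ v ∈ W2))) ∧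
    ((SimpleGraph.induce W0 Wbar).Connected ∧ (SimpleGraph.induce W0 Wbar).IsAcyclic) ∧
    ((SimpleGraph.induce W1 Wbar).Connected ∧ (SimpleGraph.induce W1 Wbar).IsAcyclic) ∧
    ((SimpleGraph.induce W2 Wbar).Connected ∧ (SimpleGraph.induce W2 Wbar).IsAcyclic) := by
  refine ⟨mem_parity_classes, fun u v h => ?_, ⟨W0_connected, Wbar_isAcyclic.induce _⟩,
    ⟨W1_connected, Wbar_isAcyclic.induce _⟩, ⟨W2_connected, Wbar_isAcyclic.induce _⟩⟩
  have := mem_parity_classes_iff_of_Wbar_adj h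
  rcases mem_parity_classes u with ⟨hu, -⟩ | ⟨hu, -⟩ | ⟨hu, -⟩ <;> tauto
end

section
/- For any two vertices u and v of the graph W̄₁ there exists exactly one path (a walk without repeated vertices) in W̄₁ from u to v. In particular, for every normalized primitive pair (p,q) with q even there is a unique minimal edge-path in W̄₁ from (1,0) to (p,q). -/
/-- The type of vertices of `W̄₁`: normalized primitive pairs `(p,q)` with `q` even. -/
def NPP1 : Type :=
  {v : ℤ × ℤ // IsCoprime v.1 v.2 ∧ (0 < v.2 ∨ (v.2 = 0 ∧ v.1 = 1)) ∧ Even v.2}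

/-- The graph `W̄₁`: vertices are normalized primitive pairs with even second coordinate,
and `(p₁,q₁)`, `(p₂,q₂)` are adjacent iff `|p₁q₂ − p₂q₁| = 2`. -/
def W1bar : SimpleGraph NPP1 where
  Adj u v := |u.1.1 * v.1.2 - v.1.1 * u.1.2| = 2
  symm := by
    constructor
    intro u v h
    rw [abs_sub_comm]
    exact h
  loopless := by
    constructor
    intro v h
    rw [sub_self, abs_zero] at h
    exact absurd h (by norm_num)

/-!
Order the vertices by their height `q`. Reducing a Bézout relation `ap + bq = 1` modulo `q`
produces, for every vertex other than `(1,0)`, a neighbour `(r,s)` with `0 < s < q`, so the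
graph is connected. Conversely, two neighbours of `(p,q)` of height at most `q` have
`p s₁ - r₁ q = ±(p s₂ - r₂ q)`; coprimality of `p` and `q` forces them to coincide (same sign) or
gives `p = r₁ + r₂` with all three odd (opposite signs). Hence each vertex has at most one
neighbour not above it, and no cycle can pass through its highest vertex. A connected acyclic
graph is a tree, in which paths are unique.
-/

namespace SimpleGraph

variable {V α : Type*} {G : SimpleGraph V}

theorem connected_of_exists_adj_lt [Preorder α] [WellFoundedLT α] (h : V → α) (r : V)
    (H : ∀ v ≠ r, ∃ u, G.Adj v u ∧ h u < h v) : G.Connected := by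
  have reach (v : V) : G.Reachable v r := by
    induction v using (InvImage.wf h wellFounded_lt).induction with
    | _ v ih =>
      by_cases hv : v = r
      · exact hv ▸ .refl v
      obtain ⟨u, hvu, hlt⟩ := H v hv
      exact hvu.reachable.trans (ih u hlt)
  exact (connected_iff_exists_forall_reachable G).mpr ⟨r, fun v => (reach v).symm⟩

/-- On a cycle, a vertex where `h` is maximal has two distinct neighbours, both no higher. -/
theorem isAcyclic_of_adj_le_unique [LinearOrder α] (h : V → α)
    (H : ∀ ⦃v a b⦄, G.Adj v a → G.Adj v b → h a ≤ h v → h b ≤ h v → a = b) : G.IsAcyclic := by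
  classical
  intro v c hc
  obtain ⟨m, hm, hmax⟩ := c.support.toFinset.exists_max_image h ⟨v, by simp⟩
  rw [List.mem_toFinset] at hm
  have hc' := hc.rotate hm
  have hle (i : ℕ) : h ((c.rotate m hm).getVert i) ≤ h m :=
    hmax _ <| List.mem_toFinset.mpr <|
      (c.mem_support_rotate_iff m hm).mp ((c.rotate m hm).getVert_mem_support i)
  exact hc'.snd_ne_penultimate <| H ((c.rotate m hm).adj_snd hc'.not_nil)
    ((c.rotate m hm).adj_penultimate hc'.not_nil).symm (hle _) (hle _)

end SimpleGraph

namespace Int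

variable {p q r s : ℤ}

theorem odd_of_isCoprime_of_even_s9 (hpq : IsCoprime p q) (hq : Even q) : Odd p := by
  obtain ⟨k, rfl⟩ := hq.two_dvd
  exact Int.isCoprime_two_right.mp hpq.of_mul_right_left

theorem isCoprime_of_odd_of_abs_det (hr : Odd r) (h : |p * s - r * q| = 2) : IsCoprime r s := by
  obtain ⟨k, rfl⟩ := hr
  rcases (abs_eq zero_le_two).mp h with h | h
  · exact ⟨1 + k * q, -(k * p), by linear_combination (-k) * h⟩
  · exact ⟨1 - k * q, k * p, by linear_combination k * h⟩

theorem abs_mul_sub_mul_ne_two (hp : Odd p) (hr : Odd r) (hq : Even q) :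
    |p * q - r * q| ≠ 2 := by
  obtain ⟨a, rfl⟩ := hp
  obtain ⟨b, rfl⟩ := hr
  obtain ⟨c, rfl⟩ := hq
  rw [show (2 * a + 1) * (c + c) - (2 * b + 1) * (c + c) = 4 * ((a - b) * c) by ring]
  intro h
  rcases (abs_eq zero_le_two).mp h with h | h <;> omega

theorem eq_of_abs_det_eq_two {r₁ s₁ r₂ s₂ : ℤ} (hpq : IsCoprime p q) (hp : Odd p)
    (hr₁ : Odd r₁) (hr₂ : Odd r₂) (hs₁ : 0 < s₁) (hs₂ : 0 ≤ s₂) (hs₁q : s₁ < q) (hs₂q : s₂ < q)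
    (h₁ : |p * s₁ - r₁ * q| = 2) (h₂ : |p * s₂ - r₂ * q| = 2) : r₁ = r₂ ∧ s₁ = s₂ := by
  have same_sign (h : p * s₁ - r₁ * q = p * s₂ - r₂ * q) : r₁ = r₂ ∧ s₁ = s₂ := by
    have hdvd : q ∣ s₁ - s₂ :=
      hpq.symm.dvd_of_dvd_mul_left ⟨r₁ - r₂, by linear_combination h⟩
    have hs : s₁ = s₂ := by
      have := Int.eq_zero_of_abs_lt_dvd hdvd (by rw [abs_lt]; omega)
      omega
    subst hs
    exact ⟨mul_right_cancel₀ (by omega : q ≠ 0) (by linear_combination -h), rfl⟩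
  have opposite_sign (h : p * s₁ - r₁ * q = -(p * s₂ - r₂ * q)) : False := by
    obtain ⟨c, hc⟩ : q ∣ s₁ + s₂ :=
      hpq.symm.dvd_of_dvd_mul_left ⟨r₁ + r₂, by linear_combination h⟩
    have hc1 : c = 1 := by
      have : 0 < c := by nlinarith
      have : c < 2 := by nlinarith
      omega
    subst hc1
    have : p = r₁ + r₂ := mul_right_cancel₀ (by omega : q ≠ 0) (by linear_combination h - p * hc)
    exact (Int.not_even_iff_odd.mpr hp) (this ▸ hr₁.add_odd hr₂)
  rcases (abs_eq zero_le_two).mp h₁ with h₁ | h₁ <;> rcases (abs_eq zero_le_two).mp h₂ with h₂ | h₂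
  · exact same_sign (h₁.trans h₂.symm)
  · exact (opposite_sign (by linarith)).elim
  · exact (opposite_sign (by linarith)).elim
  · exact same_sign (h₁.trans h₂.symm)

theorem exists_det_eq_two (hpq : IsCoprime p q) (hq : Even q) (hq2 : 2 < q) :
    ∃ r s, Even s ∧ 0 < s ∧ s < q ∧ p * s - r * q = 2 := by
  obtain ⟨a, b, hab⟩ := hpq
  have hs₀ : 0 ≤ 2 * a % q := Int.emod_nonneg _ (by omega)
  have hsq : 2 * a % q < q := Int.emod_lt_of_pos _ (by omega)
  have hdiv := Int.emod_add_mul_ediv (2 * a) q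
  generalize 2 * a % q = s, 2 * a / q = k at hs₀ hsq hdiv
  have hdet : p * s - (-(2 * b) - k * p) * q = 2 := by linear_combination p * hdiv + 2 * hab
  refine ⟨_, s, ?_, lt_of_le_of_ne hs₀ ?_, hsq, hdet⟩
  · rw [show s = 2 * a - q * k by linear_combination hdiv]
    exact (even_two_mul a).sub (hq.mul_right k)
  · rintro rfl
    have := Int.le_of_dvd two_pos (show q ∣ 2 from ⟨2 * b + k * p, by linear_combination -hdet⟩)
    omega

theorem exists_odd_abs_det_eq_two (hpq : IsCoprime p q) (hq : Even q) (hq2 : 2 < q) :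
    ∃ r s, Odd r ∧ Even s ∧ 0 < s ∧ s < q ∧ |p * s - r * q| = 2 := by
  obtain ⟨r, s, hs, hs₀, hsq, hdet⟩ := exists_det_eq_two hpq hq hq2
  rcases Int.even_or_odd r with hr | hr
  · have hp : Odd p := odd_of_isCoprime_of_even_s9 hpq hq
    refine ⟨p - r, q - s, hp.sub_even hr, hq.sub hs, by omega, by omega, ?_⟩
    rw [show p * (q - s) - (p - r) * q = -2 by linear_combination -hdet]
    norm_num
  · exact ⟨r, s, hr, hs, hs₀, hsq, by rw [hdet]; norm_num⟩

end Int

namespace NPP1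

def root : NPP1 := ⟨(1, 0), isCoprime_one_left, Or.inr ⟨rfl, rfl⟩, Even.zero⟩

theorem snd_nonneg (v : NPP1) : 0 ≤ v.1.2 := by
  rcases v.2.2.1 with h | h
  · exact h.le
  · exact h.1.ge

theorem odd_fst (v : NPP1) : Odd v.1.1 :=
  Int.odd_of_isCoprime_of_even_s9 v.2.1 v.2.2.2

theorem eq_root_of_snd_eq_zero {v : NPP1} (h : v.1.2 = 0) : v = root := by
  rcases v.2.2.1 with h' | h'
  · omega
  · exact Subtype.ext (Prod.ext h'.2 h'.1)

end NPP1

namespace W1bar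

open NPP1

theorem snd_lt_of_adj_of_snd_le {v a : NPP1} (h : W1bar.Adj v a) (hle : a.1.2 ≤ v.1.2) :
    a.1.2 < v.1.2 := by
  refine hle.lt_of_ne fun heq => Int.abs_mul_sub_mul_ne_two v.odd_fst a.odd_fst v.2.2.2 ?_
  have h' : |v.1.1 * a.1.2 - a.1.1 * v.1.2| = 2 := h
  rwa [heq] at h'

theorem eq_of_adj_of_snd_le {v a b : NPP1} (ha : W1bar.Adj v a) (hb : W1bar.Adj v b)
    (ha' : a.1.2 ≤ v.1.2) (hb' : b.1.2 ≤ v.1.2) : a = b := by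
  by_cases h₀ : a.1.2 = 0 ∧ b.1.2 = 0
  · rw [eq_root_of_snd_eq_zero h₀.1, eq_root_of_snd_eq_zero h₀.2]
  wlog ha₀ : 0 < a.1.2 generalizing a b
  · have ha₀ := a.snd_nonneg
    have hb₀ := b.snd_nonneg
    exact (this hb ha hb' ha' (by tauto) (by omega)).symm
  obtain ⟨hr, hs⟩ := Int.eq_of_abs_det_eq_two v.2.1 v.odd_fst a.odd_fst b.odd_fst ha₀
    b.snd_nonneg (snd_lt_of_adj_of_snd_le ha ha') (snd_lt_of_adj_of_snd_le hb hb') ha hb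
  exact Subtype.ext (Prod.ext hr hs)

theorem exists_adj_snd_lt {v : NPP1} (hv : v ≠ root) : ∃ u, W1bar.Adj v u ∧ u.1.2 < v.1.2 := by
  have hpos : 0 < v.1.2 := v.snd_nonneg.lt_of_ne fun h => hv (eq_root_of_snd_eq_zero h.symm)
  by_cases h2 : v.1.2 = 2
  · refine ⟨root, ?_, by simp [root, h2]⟩
    show |v.1.1 * 0 - 1 * v.1.2| = 2
    simp [h2]
  have h2' : 2 < v.1.2 := by
    obtain ⟨k, hk⟩ := v.2.2.2
    omega
  obtain ⟨r, s, hr, hs, hs₀, hsq, hdet⟩ := Int.exists_odd_abs_det_eq_two v.2.1 v.2.2.2 h2'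
  exact ⟨⟨(r, s), Int.isCoprime_of_odd_of_abs_det hr hdet, Or.inl hs₀, hs⟩, hdet, hsq⟩

theorem connected : W1bar.Connected :=
  SimpleGraph.connected_of_exists_adj_lt (fun v : NPP1 => v.1.2.toNat) root fun _ hv =>
    (exists_adj_snd_lt hv).imp fun u ⟨hadj, hlt⟩ => ⟨hadj, by have := u.snd_nonneg; omega⟩

theorem isAcyclic : W1bar.IsAcyclic :=
  SimpleGraph.isAcyclic_of_adj_le_unique (fun v : NPP1 => v.1.2) fun _ _ _ => eq_of_adj_of_snd_le

end W1bar

/-- Between any two vertices of `W̄₁` there is exactly one path (a walk without repeated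
vertices).  In particular, for every normalized primitive pair `(p,q)` with `q` even there
is a unique minimal edge-path in `W̄₁` from `(1,0)` to `(p,q)`. -/
theorem W1bar_unique_path (u v : NPP1) :
    ∃! w : W1bar.Walk u v, w.IsPath :=
  (SimpleGraph.isTree_iff_existsUnique_path.mp ⟨W1bar.connected, W1bar.isAcyclic⟩).2 u v
end

section
/- Every hyperbolic matrix A ∈ SL(2,ℤ) (i.e., with |tr A| > 2) is conjugate in GL(2,ℤ) to a matrix of the form ε·B, where ε ∈ {1,−1} and B is an integer matrix of determinant 1 all of whose entries are nonnegative. -/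
/-! For `M = !![a, b; c, d]` with determinant `1` and trace `t ≥ 3`, conjugating by
`!![1, k; 0, 1]` keeps `c` and replaces `d - a` by `d - a - 2kc`, so `k` can be chosen with
`|d - a| ≤ |c|`. Then `4bc = t² - 4 - (d - a)²`, and `bc ≠ 0` since otherwise `t = ±2`.
Either `bc > 0`, and conjugating by `diag(1, -1)` if necessary makes every entry nonnegative,
or `0 < -4bc < c²`, so `|b| < |c|` and conjugating by `!![0, -1; 1, 0]` descends on `|c|`.
A matrix of trace `≤ -3` is treated through its negative. -/

open Matrix

theorem Int.exists_two_mul_abs_sub_mul_le (x m : ℤ) (hm : m ≠ 0) :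
    ∃ k, 2 * |x - k * m| ≤ |m| := by
  have hn : 0 < m.natAbs := Int.natAbs_pos.mpr hm
  obtain ⟨k, hk⟩ : m ∣ x - x.bmod m.natAbs := Int.natAbs_dvd.mp (Int.ModEq.dvd Int.bmod_emod)
  refine ⟨k, ?_⟩
  have h1 := Int.le_bmod (x := x) hn
  have h2 := Int.bmod_le (x := x) hn
  rw [show x - k * m = x.bmod m.natAbs by linear_combination hk, Int.abs_eq_natAbs m]
  rcases abs_cases (x.bmod m.natAbs) with ⟨h, -⟩ | ⟨h, -⟩ <;> omega

section Conjugation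

variable {n R : Type*} [Fintype n] [DecidableEq n] [CommRing R]

theorem Matrix.isConj_of_mul_eq {P M N : Matrix n n R} (hP : IsUnit P.det)
    (h : P * M = N * P) : IsConj M N :=
  ⟨((isUnit_iff_isUnit_det P).mpr hP).unit, h⟩

theorem Matrix.exists_mul_mul_inv_eq_of_isConj {M N : Matrix n n R} (h : IsConj M N) :
    ∃ P : Matrix n n R, IsUnit P ∧ P * M * P⁻¹ = N := by
  obtain ⟨u, hu⟩ := h
  refine ⟨u, u.isUnit, ?_⟩
  rw [hu.eq, mul_assoc, ← coe_units_inv, Units.mul_inv, mul_one]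

variable (a b c d : R)

theorem Matrix.isConj_fin_two_translate (k : R) :
    IsConj !![a, b; c, d] !![a + k * c, b + k * (d - a) - k ^ 2 * c; c, d - k * c] :=
  isConj_of_mul_eq (P := !![1, k; 0, 1]) (by simp [det_fin_two_of])
    (by simp only [mul_fin_two]; congr 1; ring_nf)

theorem Matrix.isConj_fin_two_swap : IsConj !![a, b; c, d] !![d, -c; -b, a] :=
  isConj_of_mul_eq (P := !![0, -1; 1, 0]) (by simp [det_fin_two_of])
    (by simp only [mul_fin_two]; congr 1; ring_nf)

theorem Matrix.isConj_fin_two_neg_offDiag : IsConj !![a, b; c, d] !![a, -b; -c, d] :=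
  isConj_of_mul_eq (P := !![1, 0; 0, -1]) (by simp [det_fin_two_of])
    (by simp only [mul_fin_two]; congr 1; ring_nf)

end Conjugation

section Hyperbolic

variable (a b c d : ℤ)

theorem mul_ne_zero_of_det_eq_one_of_three_le_trace (hdet : a * d - b * c = 1)
    (htr : 3 ≤ a + d) : b * c ≠ 0 := by
  intro hbc
  have had : a * d = 1 := by linear_combination hdet + hbc
  rcases Int.eq_one_or_neg_one_of_mul_eq_one had with rfl | rfl <;> omega

theorem exists_isConj_nonneg_of_mul_pos (hdet : a * d - b * c = 1) (htr : 3 ≤ a + d)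
    (hbc : 0 < b * c) :
    ∃ B : Matrix (Fin 2) (Fin 2) ℤ, IsConj !![a, b; c, d] B ∧ ∀ i j, 0 ≤ B i j := by
  obtain ⟨ha, hd⟩ : 0 < a ∧ 0 < d :=
    (pos_and_pos_or_neg_and_neg_of_mul_pos (by linarith : 0 < a * d)).resolve_right (by omega)
  rcases pos_and_pos_or_neg_and_neg_of_mul_pos hbc with ⟨hb, hc⟩ | ⟨hb, hc⟩
  · exact ⟨_, IsConj.refl _, by simp [Fin.forall_fin_two]; omega⟩
  · exact ⟨_, isConj_fin_two_neg_offDiag a b c d, by simp [Fin.forall_fin_two]; omega⟩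

theorem exists_translate_pos_or_natAbs_lt (hdet : a * d - b * c = 1) (htr : 3 ≤ a + d) :
    ∃ k : ℤ, 0 < (b + k * (d - a) - k ^ 2 * c) * c ∨
      (b + k * (d - a) - k ^ 2 * c).natAbs < c.natAbs := by
  have hc : c ≠ 0 :=
    right_ne_zero_of_mul (mul_ne_zero_of_det_eq_one_of_three_le_trace a b c d hdet htr)
  obtain ⟨k, hk⟩ := Int.exists_two_mul_abs_sub_mul_le (d - a) (2 * c) (by omega)
  refine ⟨k, ?_⟩
  set b' := b + k * (d - a) - k ^ 2 * c
  have hb'c : b' * c ≠ 0 := mul_ne_zero_of_det_eq_one_of_three_le_trace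
    (a + k * c) b' c (d - k * c) (by linear_combination hdet) (by linarith)
  have hkey : 4 * (b' * c) = (a + d) ^ 2 - 4 - (d - a - k * (2 * c)) ^ 2 := by
    linear_combination -4 * hdet
  have hq : (d - a - k * (2 * c)) ^ 2 ≤ c ^ 2 := by
    rw [abs_mul, abs_two] at hk
    exact sq_le_sq.mpr (by linarith)
  rcases lt_or_gt_of_ne hb'c with hneg | hpos
  · right
    have hlt : -(4 * (b' * c)) < c ^ 2 := by nlinarith
    have hsq : (4 * (b' * c)) ^ 2 < (c ^ 2) ^ 2 := by
      rw [← neg_sq]; exact pow_lt_pow_left₀ hlt (by linarith) two_ne_zero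
    rw [Int.natAbs_lt_iff_sq_lt]
    nlinarith [sq_pos_of_ne_zero hc]
  · exact .inl hpos

theorem exists_isConj_nonneg_fin_two_of (hdet : a * d - b * c = 1) (htr : 3 ≤ a + d) :
    ∃ B : Matrix (Fin 2) (Fin 2) ℤ, IsConj !![a, b; c, d] B ∧ ∀ i j, 0 ≤ B i j := by
  induction hn : c.natAbs using Nat.strong_induction_on generalizing a b c d with
  | _ n ih =>
  obtain ⟨k, hk⟩ := exists_translate_pos_or_natAbs_lt a b c d hdet htr
  have hT := isConj_fin_two_translate a b c d k
  set b' := b + k * (d - a) - k ^ 2 * c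
  rcases hk with hpos | hlt
  · obtain ⟨B, hB, hnonneg⟩ := exists_isConj_nonneg_of_mul_pos
      (a + k * c) b' c (d - k * c) (by linear_combination hdet) (by linarith) hpos
    exact ⟨B, hT.trans hB, hnonneg⟩
  · obtain ⟨B, hB, hnonneg⟩ := ih _ (by rw [Int.natAbs_neg]; omega)
      (d - k * c) (-c) (-b') (a + k * c) (by linear_combination hdet) (by linarith) rfl
    exact ⟨B, (hT.trans (isConj_fin_two_swap _ _ _ _)).trans hB, hnonneg⟩

end Hyperbolic

theorem Matrix.exists_isConj_nonneg (M : Matrix (Fin 2) (Fin 2) ℤ) (hdet : M.det = 1)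
    (htr : 3 ≤ M.trace) :
    ∃ B : Matrix (Fin 2) (Fin 2) ℤ, IsConj M B ∧ ∀ i j, 0 ≤ B i j := by
  rw [det_fin_two] at hdet
  rw [trace_fin_two] at htr
  rw [eta_fin_two M]
  exact exists_isConj_nonneg_fin_two_of _ _ _ _ hdet htr

/-- Every hyperbolic matrix `A ∈ SL(2,ℤ)` (i.e. `|tr A| > 2`) is conjugate in `GL(2,ℤ)`
to a matrix of the form `ε·B`, where `ε ∈ {1,−1}` and `B` is an integer matrix of
determinant `1` all of whose entries are nonnegative. -/
theorem hyperbolic_conjugate_nonneg (A : Matrix.SpecialLinearGroup (Fin 2) ℤ)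
    (hA : 2 < |Matrix.trace (A : Matrix (Fin 2) (Fin 2) ℤ)|) :
    ∃ (P : Matrix (Fin 2) (Fin 2) ℤ) (ε : ℤ) (B : Matrix (Fin 2) (Fin 2) ℤ),
      (P.det = 1 ∨ P.det = -1) ∧ (ε = 1 ∨ ε = -1) ∧ B.det = 1 ∧
      (∀ i j, 0 ≤ B i j) ∧
      P * (A : Matrix (Fin 2) (Fin 2) ℤ) * P⁻¹ = ε • B := by
  obtain ⟨ε, hε, htr⟩ : ∃ ε : ℤ, (ε = 1 ∨ ε = -1) ∧
      3 ≤ (ε • (A : Matrix (Fin 2) (Fin 2) ℤ)).trace := by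
    rcases lt_abs.mp hA with h | h
    · exact ⟨1, .inl rfl, by rw [one_smul]; omega⟩
    · exact ⟨-1, .inr rfl, by rw [neg_one_smul, trace_neg]; omega⟩
  have hεε : ε * ε = 1 := by rcases hε with rfl | rfl <;> norm_num
  have hdet : (ε • (A : Matrix (Fin 2) (Fin 2) ℤ)).det = 1 := by
    rw [det_smul, A.det_coe, Fintype.card_fin, sq, hεε, one_mul]
  obtain ⟨B, hAB, hB⟩ := exists_isConj_nonneg _ hdet htr
  obtain ⟨P, hP, rfl⟩ := exists_mul_mul_inv_eq_of_isConj hAB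
  refine ⟨P, ε, _, Int.isUnit_iff.mp ((isUnit_iff_isUnit_det P).mp hP), hε,
    by rwa [det_conj hP], hB, ?_⟩
  rw [mul_smul_comm, smul_mul_assoc, smul_smul, hεε, one_smul]
end

section
/- Let v = (p₁,q₁) and w = (p₂,q₂) be primitive pairs with p₁q₂ − p₂q₁ = ±2. Then p₁+p₂, q₁+q₂, p₂−p₁ and q₂−q₁ are all even, and the integer pairs u₊ = ((p₁+p₂)/2, (q₁+q₂)/2) and u₋ = ((p₂−p₁)/2, (q₂−q₁)/2) are primitive and satisfy |p₁·(second coordinate of u±) − (first coordinate of u±)·q₁| = 1 and |(first coordinate of u±)·q₂ − p₂·(second coordinate of u±)| = 1. That is, each edge of W̄ is subdivided by the two midpoint slopes u₊ and u₋, each Farey-adjacent (determinant ±1) to both endpoints. -/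
/-- Let `v = (p₁,q₁)` and `w = (p₂,q₂)` be primitive pairs with `p₁q₂ − p₂q₁ = ±2`.
Then `p₁+p₂`, `q₁+q₂`, `p₂−p₁` and `q₂−q₁` are all even, and the integer pairs
`u₊ = ((p₁+p₂)/2, (q₁+q₂)/2)` and `u₋ = ((p₂−p₁)/2, (q₂−q₁)/2)` are primitive and
Farey-adjacent (determinant `±1`) to both `(p₁,q₁)` and `(p₂,q₂)`: each edge of `W̄` is
subdivided by the two midpoint slopes `u₊` and `u₋`. -/
theorem midpoints_of_Wbar_edge (p₁ q₁ p₂ q₂ : ℤ)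
    (h₁ : IsCoprime p₁ q₁) (h₂ : IsCoprime p₂ q₂)
    (h : p₁ * q₂ - p₂ * q₁ = 2 ∨ p₁ * q₂ - p₂ * q₁ = -2) :
    Even (p₁ + p₂) ∧ Even (q₁ + q₂) ∧ Even (p₂ - p₁) ∧ Even (q₂ - q₁) ∧
    IsCoprime ((p₁ + p₂) / 2) ((q₁ + q₂) / 2) ∧
    IsCoprime ((p₂ - p₁) / 2) ((q₂ - q₁) / 2) ∧
    |p₁ * ((q₁ + q₂) / 2) - ((p₁ + p₂) / 2) * q₁| = 1 ∧
    |((p₁ + p₂) / 2) * q₂ - p₂ * ((q₁ + q₂) / 2)| = 1 ∧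
    |p₁ * ((q₂ - q₁) / 2) - ((p₂ - p₁) / 2) * q₁| = 1 ∧
    |((p₂ - p₁) / 2) * q₂ - p₂ * ((q₂ - q₁) / 2)| = 1 := by
  have hne1 : ¬(Even p₁ ∧ Even q₁) := by
    rintro ⟨hp, hq⟩
    obtain ⟨a, b, hab⟩ := h₁
    have : Even (1 : ℤ) := hab ▸ ((hp.mul_left a).add (hq.mul_left b))
    simp at this
  have hne2 : ¬(Even p₂ ∧ Even q₂) := by
    rintro ⟨hp, hq⟩
    obtain ⟨a, b, hab⟩ := h₂
    have : Even (1 : ℤ) := hab ▸ ((hp.mul_left a).add (hq.mul_left b))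
    simp at this
  have hdet2 : Even (p₁ * q₂ - p₂ * q₁) := by
    rcases h with h | h <;> rw [h] <;> decide
  rw [Int.even_sub, Int.even_mul, Int.even_mul] at hdet2
  have hpp : Even (p₁ + p₂) := by rw [Int.even_add]; tauto
  have hqq : Even (q₁ + q₂) := by rw [Int.even_add]; tauto
  have hps : Even (p₂ - p₁) := by rw [Int.even_sub]; tauto
  have hqs : Even (q₂ - q₁) := by rw [Int.even_sub]; tauto
  obtain ⟨m, hm⟩ := hpp
  obtain ⟨n, hn⟩ := hqq
  obtain ⟨r, hr⟩ := hps
  obtain ⟨s, hs⟩ := hqs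
  have em : (p₁ + p₂) / 2 = m := by omega
  have en : (q₁ + q₂) / 2 = n := by omega
  have er : (p₂ - p₁) / 2 = r := by omega
  have es : (q₂ - q₁) / 2 = s := by omega
  rw [em, en, er, es]
  rcases h with h | h
  · have d1 : p₁ * n - m * q₁ = 1 := by
      have key : 2 * (p₁ * n - m * q₁) = 2 := by linear_combination h - p₁ * hn + q₁ * hm
      linarith
    have d2 : m * q₂ - p₂ * n = 1 := by
      have key : 2 * (m * q₂ - p₂ * n) = 2 := by linear_combination h - q₂ * hm + p₂ * hn
      linarith
    have d3 : p₁ * s - r * q₁ = 1 := by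
      have key : 2 * (p₁ * s - r * q₁) = 2 := by linear_combination h - p₁ * hs + q₁ * hr
      linarith
    have d4 : r * q₂ - p₂ * s = -1 := by
      have key : 2 * (r * q₂ - p₂ * s) = -2 := by linear_combination -h - q₂ * hr + p₂ * hs
      linarith
    exact ⟨⟨m, hm⟩, ⟨n, hn⟩, ⟨r, hr⟩, ⟨s, hs⟩,
      ⟨-q₁, p₁, by linarith⟩, ⟨-q₁, p₁, by linarith⟩,
      by rw [d1]; decide, by rw [d2]; decide, by rw [d3]; decide, by rw [d4]; decide⟩
  · have d1 : p₁ * n - m * q₁ = -1 := by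
      have key : 2 * (p₁ * n - m * q₁) = -2 := by linear_combination h - p₁ * hn + q₁ * hm
      linarith
    have d2 : m * q₂ - p₂ * n = -1 := by
      have key : 2 * (m * q₂ - p₂ * n) = -2 := by linear_combination h - q₂ * hm + p₂ * hn
      linarith
    have d3 : p₁ * s - r * q₁ = -1 := by
      have key : 2 * (p₁ * s - r * q₁) = -2 := by linear_combination h - p₁ * hs + q₁ * hr
      linarith
    have d4 : r * q₂ - p₂ * s = 1 := by
      have key : 2 * (r * q₂ - p₂ * s) = 2 := by linear_combination -h - q₂ * hr + p₂ * hs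
      linarith
    exact ⟨⟨m, hm⟩, ⟨n, hn⟩, ⟨r, hr⟩, ⟨s, hs⟩,
      ⟨q₁, -p₁, by linarith⟩, ⟨q₁, -p₁, by linarith⟩,
      by rw [d1]; decide, by rw [d2]; decide, by rw [d3]; decide, by rw [d4]; decide⟩
end
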